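/- For every positive integer m and every positive integer t, the number of points x ∈ ℤ^m lying in the dilate t·P(m,2) equals C(3t+m, m) − m·C(t+m−1, m), where C(a,b) denotes the binomial coefficient. -/

import Mathlib

/-!
The partial permutohedron `P(m,2)` is the capped simplex `{x ∈ [0,2]^m | ∑ xᵢ ≤ 3}`. One
inclusion holds because the nonzero coordinates of a vertex are distinct elements of `{1,2}`; for
the other, every linear functional `c` is maximised over the capped simplex at one of the vertices
`0`, `2eᵢ`, `2eᵢ + eⱼ` (take `i`, `j` with the two largest `cᵢ`), and Hahn–Banach separation does
the rest.

So the lattice points of `t·P(m,2)` are the `x ∈ ℕ^m` with `∑ xᵢ ≤ 3t` and all `xᵢ ≤ 2t`. Since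
`2(2t+1) > 3t`, at most one coordinate can exceed `2t`, and removing for each `i` the points with
`xᵢ ≥ 2t+1` (shifting `xᵢ` down by `2t+1`) leaves `C(3t+m, m) - m·C(t-1+m, m)` points, the
simplex counts coming from stars and bars.
-/

open scoped Pointwise

/-- The vertex set of the partial permutohedron: vectors in `{0,1,…,n}^m`
whose nonzero entries are pairwise distinct. -/
def ppVertices (m n : ℕ) : Set (Fin m → ℝ) :=
  {x | (∀ i, ∃ k : ℕ, k ≤ n ∧ x i = k) ∧
       ∀ i j : Fin m, i ≠ j → x i ≠ 0 → x j ≠ 0 → x i ≠ x j}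

/-- The partial permutohedron `P(m,n)`. -/
def partialPermutohedron (m n : ℕ) : Set (Fin m → ℝ) :=
  convexHull ℝ (ppVertices m n)

/-- The number of lattice points in the dilate `t·P(m,n)`. -/
noncomputable def latticeCount (m n t : ℕ) : ℕ :=
  {x : Fin m → ℤ | (fun i => (x i : ℝ)) ∈ (t : ℝ) • partialPermutohedron m n}.ncard

open Finset

section CappedSimplex

variable {ι : Type*} [Fintype ι]

variable (ι) in
def cappedSimplex (a b : ℝ) : Set (ι → ℝ) :=
  {x | (∀ i, 0 ≤ x i ∧ x i ≤ a) ∧ ∑ i, x i ≤ b}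

lemma convex_cappedSimplex (a b : ℝ) : Convex ℝ (cappedSimplex ι a b) := by
  have hbox (i : ι) : Convex ℝ {x : ι → ℝ | 0 ≤ x i ∧ x i ≤ a} :=
    (convex_halfSpace_ge (LinearMap.proj i : (ι → ℝ) →ₗ[ℝ] ℝ).isLinear 0).inter
      (convex_halfSpace_le (LinearMap.proj i : (ι → ℝ) →ₗ[ℝ] ℝ).isLinear a)
  have hsum : Convex ℝ {x : ι → ℝ | ∑ i, x i ≤ b} := by
    simpa using convex_halfSpace_le (∑ i, LinearMap.proj i : (ι → ℝ) →ₗ[ℝ] ℝ).isLinear b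
  convert (convex_iInter hbox).inter hsum using 1
  ext x
  simp [cappedSimplex, Set.mem_iInter, forall_and]

lemma smul_cappedSimplex {c : ℝ} (hc : 0 < c) (a b : ℝ) :
    c • cappedSimplex ι a b = cappedSimplex ι (c * a) (c * b) := by
  ext x
  simp only [Set.mem_smul_set_iff_inv_smul_mem₀ hc.ne', cappedSimplex, Set.mem_ofPred_eq,
    Pi.smul_apply, smul_eq_mul, ← mul_sum, inv_mul_le_iff₀ hc,
    mul_nonneg_iff_of_pos_left (inv_pos.2 hc)]

lemma dotProduct_le_of_mem_cappedSimplex {a b : ℝ} {x : ι → ℝ} (hx : x ∈ cappedSimplex ι a b)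
    {c : ι → ℝ} {i : ι} {q : ℝ} (hq : 0 ≤ q) (hqi : q ≤ c i) (hc : ∀ j ≠ i, c j ≤ q) :
    c ⬝ᵥ x ≤ (c i - q) * a + q * b := by
  classical
  obtain ⟨hbox, hsum⟩ := hx
  have hrest : ∑ j ∈ univ.erase i, c j * x j ≤ q * (∑ j, x j - x i) := by
    rw [← add_sum_erase _ _ (mem_univ i), add_sub_cancel_left, mul_sum]
    exact sum_le_sum fun j hj => mul_le_mul_of_nonneg_right (hc j (ne_of_mem_erase hj)) (hbox j).1
  rw [dotProduct, ← add_sum_erase _ _ (mem_univ i)]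
  nlinarith [mul_le_mul_of_nonneg_left (hbox i).2 (sub_nonneg.2 hqi),
    mul_le_mul_of_nonneg_left hsum hq]

end CappedSimplex

lemma subset_convexHull_of_forall_dotProduct_le {ι : Type*} [Fintype ι] {s t : Set (ι → ℝ)}
    (hs : s.Finite) (h : ∀ c, ∀ x ∈ t, ∃ v ∈ s, c ⬝ᵥ x ≤ c ⬝ᵥ v) : t ⊆ convexHull ℝ s := by
  classical
  intro x hx
  by_contra hxs
  obtain ⟨f, u, hfs, hfx⟩ := geometric_hahn_banach_closed_point (convex_convexHull ℝ s)
    (hs.isClosed_convexHull ℝ) hxs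
  have hf (y : ι → ℝ) : f y = (fun i => f fun j => if i = j then 1 else 0) ⬝ᵥ y := by
    simpa [dotProduct, mul_comm] using f.toLinearMap.pi_apply_eq_sum_univ y
  obtain ⟨v, hv, hxv⟩ := h _ x hx
  have := hfs v (subset_convexHull ℝ s hv)
  rw [hf] at this hfx
  linarith

lemma finite_ppVertices (m n : ℕ) : (ppVertices m n).Finite := by
  refine (Set.Finite.pi fun _ => (Set.finite_Iic n).image (Nat.cast : ℕ → ℝ)).subset ?_
  rintro x ⟨hx, -⟩ i -
  obtain ⟨k, hk, hxk⟩ := hx i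
  exact ⟨k, hk, hxk.symm⟩

lemma zero_mem_ppVertices (m n : ℕ) : (0 : Fin m → ℝ) ∈ ppVertices m n :=
  ⟨fun _ => ⟨0, Nat.zero_le n, by simp⟩, fun _ _ _ h => absurd rfl h⟩

lemma single_mem_ppVertices {m n k : ℕ} (hk : k ≤ n) (i : Fin m) :
    Pi.single i (k : ℝ) ∈ ppVertices m n := by
  refine ⟨fun p => ?_, fun p q hpq hp hq => ?_⟩
  · rcases eq_or_ne p i with rfl | hpi
    · exact ⟨k, hk, by simp⟩
    · exact ⟨0, Nat.zero_le n, by simp [hpi]⟩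
  · rcases eq_or_ne p i with rfl | hpi
    · simp [hpq.symm] at hq
    · simp [hpi] at hp

lemma single_add_single_mem_ppVertices {m n k l : ℕ} (hk : k ≤ n) (hl : l ≤ n) (hkl : k ≠ l)
    {i j : Fin m} (hij : i ≠ j) : Pi.single i (k : ℝ) + Pi.single j (l : ℝ) ∈ ppVertices m n := by
  have hx (p : Fin m) : (Pi.single i (k : ℝ) + Pi.single j (l : ℝ) : Fin m → ℝ) p
      = if p = i then (k : ℝ) else if p = j then (l : ℝ) else 0 := by
    rcases eq_or_ne p i with rfl | hpi <;> simp [Pi.single_apply, *]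
  refine ⟨fun p => ?_, fun p q hpq hp hq => ?_⟩
  · rw [hx]
    split_ifs
    exacts [⟨k, hk, rfl⟩, ⟨l, hl, rfl⟩, ⟨0, Nat.zero_le n, by simp⟩]
  · simp only [hx] at hp hq ⊢
    split_ifs at hp hq ⊢ <;> simp_all [eq_comm]

lemma ppVertices_two_subset_cappedSimplex (m : ℕ) :
    ppVertices m 2 ⊆ cappedSimplex (Fin m) 2 3 := by
  classical
  rintro x ⟨hval, hdist⟩
  have hbox (i : Fin m) : x i = 0 ∨ x i = 1 ∨ x i = 2 := by
    obtain ⟨k, hk, hxk⟩ := hval i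
    interval_cases k <;> simp [hxk]
  refine ⟨fun i => by rcases hbox i with h | h | h <;> norm_num [h], ?_⟩
  set s := univ.filter fun i => x i ≠ 0
  have hinj : Set.InjOn x s := fun i hi j hj hij => by
    by_contra hne
    exact hdist i j hne (mem_filter.1 hi).2 (mem_filter.1 hj).2 hij
  calc ∑ i, x i = ∑ i ∈ s, x i := (sum_filter_ne_zero _).symm
    _ = ∑ v ∈ s.image x, v := (sum_image (f := fun v => v) hinj).symm
    _ ≤ ∑ v ∈ ({1, 2} : Finset ℝ), v := by
      refine sum_le_sum_of_subset_of_nonneg ?_ fun v hv _ => ?_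
      · intro v hv
        obtain ⟨i, hi, rfl⟩ := mem_image.1 hv
        have := (mem_filter.1 hi).2
        rcases hbox i with h | h | h <;> simp_all
      · simp only [mem_insert, mem_singleton] at hv
        rcases hv with rfl | rfl <;> norm_num
    _ = 3 := by norm_num

lemma exists_mem_ppVertices_two_dotProduct_le {m : ℕ} (c : Fin m → ℝ) {x : Fin m → ℝ}
    (hx : x ∈ cappedSimplex (Fin m) 2 3) : ∃ v ∈ ppVertices m 2, c ⬝ᵥ x ≤ c ⬝ᵥ v := by
  by_cases hc : ∀ i, c i ≤ 0
  · refine ⟨0, zero_mem_ppVertices m 2, ?_⟩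
    rw [dotProduct_zero]
    exact sum_nonpos fun i _ => mul_nonpos_of_nonpos_of_nonneg (hc i) (hx.1 i).1
  simp only [not_forall, not_le] at hc
  obtain ⟨i₀, hi₀⟩ := hc
  have : Nonempty (Fin m) := ⟨i₀⟩
  obtain ⟨i, hi⟩ := Finite.exists_max c
  by_cases hc' : ∀ j ≠ i, c j ≤ 0
  · refine ⟨Pi.single i ((2 : ℕ) : ℝ), single_mem_ppVertices le_rfl i, ?_⟩
    have := dotProduct_le_of_mem_cappedSimplex hx le_rfl (hi₀.le.trans (hi i₀)) hc'
    rw [dotProduct_single, Nat.cast_ofNat]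
    linarith
  simp only [not_forall, not_le] at hc'
  obtain ⟨j₀, hj₀i, hj₀⟩ := hc'
  have hmem {k : Fin m} (hk : k ≠ i) : k ∈ univ.erase i := mem_erase.2 ⟨hk, mem_univ k⟩
  obtain ⟨j, hj, hjmax⟩ := exists_max_image (univ.erase i) c ⟨j₀, hmem hj₀i⟩
  refine ⟨Pi.single i ((2 : ℕ) : ℝ) + Pi.single j ((1 : ℕ) : ℝ),
    single_add_single_mem_ppVertices le_rfl one_le_two (by decide) (ne_of_mem_erase hj).symm, ?_⟩
  have := dotProduct_le_of_mem_cappedSimplex hx (hj₀.le.trans (hjmax j₀ (hmem hj₀i))) (hi j)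
    fun k hk => hjmax k (hmem hk)
  rw [dotProduct_add, dotProduct_single, dotProduct_single, Nat.cast_ofNat, Nat.cast_one]
  linarith

theorem partialPermutohedron_two (m : ℕ) :
    partialPermutohedron m 2 = cappedSimplex (Fin m) 2 3 :=
  (convexHull_min (ppVertices_two_subset_cappedSimplex m) (convex_cappedSimplex 2 3)).antisymm
    (subset_convexHull_of_forall_dotProduct_le (finite_ppVertices m 2)
      fun c _ hx => exists_mem_ppVertices_two_dotProduct_le c hx)

section Counting

variable (ι : Type*) [Fintype ι] [DecidableEq ι]

def simplexLattice (N : ℕ) : Finset (ι → ℕ) :=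
  (Fintype.piFinset fun _ => range (N + 1)).filter fun x => ∑ i, x i ≤ N

def cappedSimplexLattice (b N : ℕ) : Finset (ι → ℕ) :=
  (simplexLattice ι N).filter fun x => ∀ i, x i ≤ b

variable {ι}

@[simp]
lemma mem_simplexLattice {N : ℕ} {x : ι → ℕ} : x ∈ simplexLattice ι N ↔ ∑ i, x i ≤ N := by
  simp only [simplexLattice, mem_filter, Fintype.mem_piFinset, mem_range, and_iff_right_iff_imp]
  exact fun h i => Nat.lt_succ_of_le <| (single_le_sum (fun j _ => Nat.zero_le (x j))
    (mem_univ i)).trans h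

noncomputable def simplexLatticeEquivSym (N : ℕ) : simplexLattice ι N ≃ Sym (Option ι) N :=
  Equiv.trans (β := {P : Option ι → ℕ // ∑ o, P o = N})
    { toFun := fun x => ⟨fun o => o.elim (N - ∑ i, x.1 i) x.1, by
        have := mem_simplexLattice.1 x.2
        simp only [Fintype.sum_option, Option.elim_none, Option.elim_some]
        omega⟩
      invFun := fun P => ⟨fun i => P.1 (some i), by
        have := P.2
        rw [Fintype.sum_option] at this
        rw [mem_simplexLattice]
        omega⟩
      left_inv := fun x => rfl
      right_inv := fun P => by
        have := P.2
        rw [Fintype.sum_option] at this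
        ext o
        cases o
        · simp only [Option.elim_none]
          omega
        · rfl }
    (Sym.equivNatSumOfFintype (Option ι) N).symm

lemma card_simplexLattice (N : ℕ) :
    #(simplexLattice ι N) = (N + Fintype.card ι).choose (Fintype.card ι) := by
  rw [card_eq_of_equiv_fintype (simplexLatticeEquivSym N), Sym.card_sym_eq_choose,
    Fintype.card_option, Nat.add_right_comm, Nat.add_sub_cancel, add_comm, Nat.choose_symm_add]

lemma card_filter_lt_apply {b N : ℕ} (hbN : b < N) (i : ι) :
    #((simplexLattice ι N).filter fun x => b < x i) = #(simplexLattice ι (N - (b + 1))) := by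
  have hsum (y : ι → ℕ) : ∑ j, (y + Pi.single i (b + 1) : ι → ℕ) j = ∑ j, y j + (b + 1) := by
    simp [sum_add_distrib]
  refine card_nbij' (· - Pi.single i (b + 1)) (· + Pi.single i (b + 1)) ?_ ?_ ?_ ?_
  · intro x hx
    simp only [coe_filter, Set.mem_ofPred_eq, mem_simplexLattice] at hx
    have hle : Pi.single i (b + 1) ≤ x := fun j => by
      rcases eq_or_ne j i with rfl | hj <;> simp [*]
    simp only [mem_coe, mem_simplexLattice]
    have := hsum (x - Pi.single i (b + 1))
    rw [tsub_add_cancel_of_le hle] at this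
    omega
  · intro y hy
    rw [mem_coe, mem_simplexLattice] at hy
    rw [coe_filter]
    refine ⟨?_, by simp; omega⟩
    rw [mem_simplexLattice, hsum]
    omega
  · intro x hx
    simp only [coe_filter, Set.mem_ofPred_eq] at hx
    refine tsub_add_cancel_of_le fun j => ?_
    rcases eq_or_ne j i with rfl | hj <;> simp [*]
  · intro y _
    exact add_tsub_cancel_right y _

lemma disjoint_filter_lt_apply {b N : ℕ} (hN : N ≤ 2 * b + 1) {i j : ι} (hij : i ≠ j) :
    Disjoint ((simplexLattice ι N).filter fun x => b < x i)
      ((simplexLattice ι N).filter fun x => b < x j) := by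
  refine disjoint_filter.2 fun x hx hxi hxj => ?_
  have : x i + x j ≤ ∑ k, x k := by
    rw [← sum_pair hij]
    exact sum_le_sum_of_subset (subset_univ _)
  have := mem_simplexLattice.1 hx
  omega

lemma card_cappedSimplexLattice_add {b N : ℕ} (hbN : b < N) (hN : N ≤ 2 * b + 1) :
    #(cappedSimplexLattice ι b N) + Fintype.card ι * #(simplexLattice ι (N - (b + 1)))
      = #(simplexLattice ι N) := by
  have hbad : ((simplexLattice ι N).filter fun x => ¬ ∀ i, x i ≤ b)
      = univ.biUnion fun i => (simplexLattice ι N).filter fun x => b < x i := by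
    ext x
    simp only [mem_filter, mem_biUnion, mem_univ, true_and, not_forall, not_le, exists_and_left]
  rw [← card_filter_add_card_filter_not (s := simplexLattice ι N) (fun x => ∀ i, x i ≤ b), hbad,
    card_biUnion fun i _ j _ hij => disjoint_filter_lt_apply hN hij,
    sum_congr rfl fun i _ => card_filter_lt_apply hbN i, sum_const, card_univ, smul_eq_mul,
    cappedSimplexLattice]

end Counting

lemma natCast_mem_cappedSimplex_iff {ι : Type*} [Fintype ι] {y : ι → ℕ} {a b : ℕ} :
    (fun i => (y i : ℝ)) ∈ cappedSimplex ι a b ↔ (∀ i, y i ≤ a) ∧ ∑ i, y i ≤ b := by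
  simp only [cappedSimplex, Set.mem_ofPred_eq, Nat.cast_nonneg, true_and]
  norm_cast

lemma latticeCount_two (m : ℕ) {t : ℕ} (ht : 0 < t) :
    latticeCount m 2 t = #(cappedSimplexLattice (Fin m) (2 * t) (3 * t)) := by
  have hset : {x : Fin m → ℤ | (fun i => (x i : ℝ)) ∈ (t : ℝ) • partialPermutohedron m 2}
      = (fun (y : Fin m → ℕ) i => (y i : ℤ)) '' (cappedSimplexLattice (Fin m) (2 * t) (3 * t) :
          Set (Fin m → ℕ)) := by
    have hdil : (t : ℝ) • cappedSimplex (Fin m) 2 3 = cappedSimplex (Fin m) ↑(2 * t) ↑(3 * t) := by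
      rw [smul_cappedSimplex (by positivity)]
      push_cast
      ring_nf
    rw [partialPermutohedron_two, hdil]
    ext x
    simp only [cappedSimplexLattice, Set.mem_ofPred_eq, Set.mem_image, coe_filter,
      mem_simplexLattice]
    constructor
    · intro hx
      lift x to Fin m → ℕ using fun i => Int.cast_nonneg_iff.1 (hx.1 i).1
      simp only [Int.cast_natCast] at hx
      exact ⟨x, (natCast_mem_cappedSimplex_iff.1 hx).symm, rfl⟩
    · rintro ⟨y, hy, rfl⟩
      simp only [Int.cast_natCast]
      exact natCast_mem_cappedSimplex_iff.2 hy.symm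
  rw [latticeCount, hset, Set.ncard_image_of_injective _
    fun a b hab => funext fun i => Nat.cast_injective (congrFun hab i), Set.ncard_coe_finset]

theorem ehrhart_Pm2_general (m t : ℕ) (ht : 0 < t) :
    (latticeCount m 2 t : ℤ) =
      ((3 * t + m).choose m : ℤ) - (m : ℤ) * ((t + m - 1).choose m : ℤ) := by
  have hcount := card_cappedSimplexLattice_add (ι := Fin m) (b := 2 * t) (N := 3 * t)
    (by omega) (by omega)
  rw [card_simplexLattice, card_simplexLattice, Fintype.card_fin,
    show 3 * t - (2 * t + 1) + m = t + m - 1 by omega] at hcount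
  rw [latticeCount_two m ht]
  exact eq_sub_of_add_eq (by exact_mod_cast hcount)

/-- The Ehrhart polynomial of `P(m,2)`:
`|t·P(m,2) ∩ ℤ^m| = C(3t+m, m) - m·C(t+m-1, m)`. -/
theorem ehrhart_Pm2 (m t : ℕ) (hm : 0 < m) (ht : 0 < t) :
    (latticeCount m 2 t : ℤ) =
      ((3 * t + m).choose m : ℤ) - (m : ℤ) * ((t + m - 1).choose m : ℤ) :=
  ehrhart_Pm2_general m t ht
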